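/- Let ε > 0 and let C : X → ℝ ∪ {+∞} where X = Fin 𝒯 → Fin N is the finite index set, and define h(M) = ⟨C,M⟩ + εD(M) for nonnegative tensors M and h(M) = +∞ if M has a negative entry. Then the Fenchel conjugate of h satisfies, for every T ∈ ℝ^X, h*(T) = ε·Σ_{x∈X} (exp((T(x) − C(x))/ε) − 1) = ε⟨K, exp(T/ε)⟩ − N^𝒯·ε, where exp(T/ε) is the elementwise exponential; in particular h*(T) is finite for every T ∈ ℝ^X, i.e., h is co-finite. -/

import Mathlib

/-!
The cost is separable, `h(M) = ∑ₓ φₓ(M x)` with `φₓ(m) = C(x)·m + ε(m log m − m + 1)` on `m ≥ 0`,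
so its conjugate is the sum of the scalar conjugates. For finite `c`, the inequality
`1 + u ≤ eᵘ` at `u = a/ε − log m` gives `a·m − ε(m log m − m + 1) ≤ ε(e^{a/ε} − 1)`,
where `a = t − c`, with equality at `m = e^{a/ε}`. An entry with `C(x) = +∞` forces `m = 0` (any
positive mass makes `⟨C, M⟩ = +∞`) and contributes `−ε`, which is the same formula with
`K(x) = 0`. Hence `M = K·exp(T/ε)` attains the sum of the entrywise bounds.
-/

open scoped BigOperators
open Filter

noncomputable section

open scoped Classical

abbrev Tens (T N : ℕ) := (Fin T → Fin N) → ℝ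

/-- Marginal projection `P_t(M)`. -/
def tproj {T N : ℕ} (t : Fin T) (M : Tens T N) : Fin N → ℝ :=
  fun i => ∑ x : Fin T → Fin N, if x t = i then M x else 0

/-- Bimarginal projection `P_{t₁,t₂}(M)`. -/
def tbiproj {T N : ℕ} (t₁ t₂ : Fin T) (M : Tens T N) : Fin N × Fin N → ℝ :=
  fun p => ∑ x : Fin T → Fin N, if x t₁ = p.1 ∧ x t₂ = p.2 then M x else 0

/-- Entropy `D(M)` (note `Real.log 0 = 0`, so the convention `0 · log 0 = 0` holds). -/
def entropy {T N : ℕ} (M : Tens T N) : ℝ :=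
  ∑ x : Fin T → Fin N, (M x * Real.log (M x) - M x + 1)

/-- `⟨C, M⟩` (in `EReal`, where `0 · ⊤ = 0`). -/
def einner {T N : ℕ} (C : (Fin T → Fin N) → EReal) (M : Tens T N) : EReal :=
  ∑ x : Fin T → Fin N, C x * ((M x : ℝ) : EReal)

/-- `exp(-c/ε)` with the convention `exp(-∞) = 0`. -/
def expNegE (ε : ℝ) (c : EReal) : ℝ :=
  if c = ⊤ then 0 else Real.exp (-c.toReal / ε)

/-- Fenchel conjugate `h*(T) = sup_M ⟨T,M⟩ - h(M)` over tensors. -/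
def fconj {ι : Type*} [Fintype ι] (h : (ι → ℝ) → EReal) (y : ι → ℝ) : EReal :=
  ⨆ x : ι → ℝ, (((∑ i, y i * x i : ℝ)) : EReal) - h x

open Real Finset

namespace EReal

lemma coe_finset_sum {ι : Type*} (s : Finset ι) (f : ι → ℝ) :
    ((∑ i ∈ s, f i : ℝ) : EReal) = ∑ i ∈ s, (f i : EReal) :=
  map_sum (⟨⟨(↑), coe_zero⟩, coe_add⟩ : ℝ →+ EReal) f s

lemma finset_sum_ne_bot {ι : Type*} {s : Finset ι} {f : ι → EReal} (h : ∀ i ∈ s, f i ≠ ⊥) :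
    ∑ i ∈ s, f i ≠ ⊥ := fun hsum => by
  obtain ⟨i, hi, hbot⟩ := WithBot.sum_eq_bot_iff.mp hsum
  exact h i hi hbot

end EReal

section Scalar

variable {ε : ℝ}

lemma mul_sub_entropy_le (hε : 0 < ε) (a : ℝ) {m : ℝ} (hm : 0 ≤ m) :
    a * m - ε * (m * log m - m + 1) ≤ ε * (exp (a / ε) - 1) := by
  rcases hm.eq_or_lt with rfl | hm
  · linarith [mul_pos hε (exp_pos (a / ε))]
  have hyoung : a / ε - log m + 1 ≤ exp (a / ε) / m := by
    simpa [exp_sub, exp_log hm] using add_one_le_exp (a / ε - log m)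
  calc a * m - ε * (m * log m - m + 1) = ε * m * (a / ε - log m + 1) - ε := by
        field_simp; ring
    _ ≤ ε * m * (exp (a / ε) / m) - ε := by gcongr
    _ = ε * (exp (a / ε) - 1) := by field_simp

lemma mul_sub_entropy_exp_div (hε : ε ≠ 0) (a : ℝ) :
    a * exp (a / ε) - ε * (exp (a / ε) * log (exp (a / ε)) - exp (a / ε) + 1)
      = ε * (exp (a / ε) - 1) := by
  rw [log_exp]; field_simp; ring

lemma expNegE_nonneg (c : EReal) : 0 ≤ expNegE ε c := by
  unfold expNegE; split_ifs <;> positivity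

lemma expNegE_mul_exp_div {c : EReal} (hc : c ≠ ⊤) (t : ℝ) :
    expNegE ε c * exp (t / ε) = exp ((t - c.toReal) / ε) := by
  rw [expNegE, if_neg hc, ← exp_add]; ring_nf

def entropicGain (ε : ℝ) (c : EReal) (t m : ℝ) : ℝ :=
  t * m - (c.toReal * m + ε * (m * log m - m + 1))

lemma entropicGain_le (hε : 0 < ε) {c : EReal} (t : ℝ) {m : ℝ} (hm : 0 ≤ m)
    (hcm : c = ⊤ → m = 0) : entropicGain ε c t m ≤ ε * (expNegE ε c * exp (t / ε) - 1) := by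
  by_cases hc : c = ⊤
  · simp [entropicGain, hcm hc, hc, expNegE]
  · rw [entropicGain, expNegE_mul_exp_div hc]
    convert mul_sub_entropy_le hε (t - c.toReal) hm using 1
    ring

lemma entropicGain_maximizer (hε : ε ≠ 0) (c : EReal) (t : ℝ) :
    entropicGain ε c t (expNegE ε c * exp (t / ε)) = ε * (expNegE ε c * exp (t / ε) - 1) := by
  by_cases hc : c = ⊤
  · simp [entropicGain, hc, expNegE]
  · rw [entropicGain, expNegE_mul_exp_div hc, ← mul_sub_entropy_exp_div hε]
    ring

end Scalar

section Separable

variable {ι : Type*} [Fintype ι] {ε : ℝ} {C : ι → EReal} {M : ι → ℝ}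

def entropicCost (ε : ℝ) (C : ι → EReal) (M : ι → ℝ) : EReal :=
  if ∀ x, 0 ≤ M x then
    ∑ x, C x * (M x : EReal) + ((ε * ∑ x, (M x * log (M x) - M x + 1) : ℝ) : EReal)
  else ⊤

lemma sum_mul_coe_eq_coe_sum_toReal (hC : ∀ x, C x ≠ ⊥) (hM : ∀ x, C x = ⊤ → M x = 0) :
    ∑ x, C x * (M x : EReal) = ((∑ x, (C x).toReal * M x : ℝ) : EReal) := by
  rw [EReal.coe_finset_sum]
  refine sum_congr rfl fun x _ => ?_
  by_cases hx : C x = ⊤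
  · simp [hx, hM x hx]
  · rw [EReal.coe_mul, EReal.coe_toReal hx (hC x)]

lemma sum_mul_coe_eq_top (hC : ∀ x, C x ≠ ⊥) (hM : ∀ x, 0 ≤ M x) {x₀ : ι} (hx₀ : C x₀ = ⊤)
    (hMx₀ : M x₀ ≠ 0) : ∑ x, C x * (M x : EReal) = ⊤ := by
  rw [← add_sum_erase _ _ (mem_univ x₀), hx₀, EReal.top_mul_coe_of_pos ((hM x₀).lt_of_ne' hMx₀)]
  refine EReal.top_add_of_ne_bot (EReal.finset_sum_ne_bot fun x _ => ?_)
  exact (EReal.mul_ne_bot _ _).mpr ⟨Or.inl (hC x), Or.inr (EReal.coe_ne_bot _),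
    Or.inr (EReal.coe_nonneg.mpr (hM x)), Or.inr (EReal.coe_ne_top _)⟩

lemma entropicCost_of_admissible (hC : ∀ x, C x ≠ ⊥) (hM : ∀ x, 0 ≤ M x)
    (hMC : ∀ x, C x = ⊤ → M x = 0) :
    entropicCost ε C M
      = ((∑ x, ((C x).toReal * M x + ε * (M x * log (M x) - M x + 1)) : ℝ) : EReal) := by
  rw [entropicCost, if_pos hM, sum_mul_coe_eq_coe_sum_toReal hC hMC, ← EReal.coe_add, mul_sum,
    sum_add_distrib]

lemma entropicCost_eq_top (hC : ∀ x, C x ≠ ⊥) (hM : ¬ ∀ x, 0 ≤ M x ∧ (C x = ⊤ → M x = 0)) :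
    entropicCost ε C M = ⊤ := by
  rw [entropicCost]
  split_ifs with hnonneg
  · obtain ⟨x, hx⟩ := not_forall.mp hM
    obtain ⟨hCx, hMx⟩ := Classical.not_imp.mp (not_and.mp hx (hnonneg x))
    rw [sum_mul_coe_eq_top hC hnonneg hCx hMx]
    exact EReal.top_add_of_ne_bot (EReal.coe_ne_bot _)
  · rfl

lemma coe_sum_mul_sub_entropicCost_le (hε : 0 < ε) (hC : ∀ x, C x ≠ ⊥) (t M : ι → ℝ) :
    ((∑ x, t x * M x : ℝ) : EReal) - entropicCost ε C M
      ≤ ((ε * ∑ x, (expNegE ε (C x) * exp (t x / ε) - 1) : ℝ) : EReal) := by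
  by_cases hM : ∀ x, 0 ≤ M x ∧ (C x = ⊤ → M x = 0)
  · rw [entropicCost_of_admissible hC (fun x => (hM x).1) (fun x => (hM x).2), ← EReal.coe_sub,
      EReal.coe_le_coe_iff, ← sum_sub_distrib, mul_sum]
    exact sum_le_sum fun x _ => entropicGain_le hε (t x) (hM x).1 (hM x).2
  · rw [entropicCost_eq_top hC hM, EReal.sub_top]
    exact bot_le

lemma coe_sum_mul_sub_entropicCost_maximizer (hε : 0 < ε) (hC : ∀ x, C x ≠ ⊥) (t : ι → ℝ) :
    ((∑ x, t x * (expNegE ε (C x) * exp (t x / ε)) : ℝ) : EReal)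
        - entropicCost ε C (fun x => expNegE ε (C x) * exp (t x / ε))
      = ((ε * ∑ x, (expNegE ε (C x) * exp (t x / ε) - 1) : ℝ) : EReal) := by
  rw [entropicCost_of_admissible hC (fun x => mul_nonneg (expNegE_nonneg _) (exp_pos _).le)
      (fun x hx => by simp [expNegE, hx]), ← EReal.coe_sub, ← sum_sub_distrib, mul_sum]
  exact congrArg _ (sum_congr rfl fun x _ => entropicGain_maximizer hε.ne' (C x) (t x))

theorem fconj_entropicCost (hε : 0 < ε) (hC : ∀ x, C x ≠ ⊥) (t : ι → ℝ) :
    fconj (entropicCost ε C) t = ((ε * ∑ x, (expNegE ε (C x) * exp (t x / ε) - 1) : ℝ) : EReal) :=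
  le_antisymm (iSup_le (coe_sum_mul_sub_entropicCost_le hε hC t))
    ((coe_sum_mul_sub_entropicCost_maximizer hε hC t).symm.trans_le (le_iSup_of_le _ le_rfl))

end Separable

/-- For `h(M) = ⟨C,M⟩ + εD(M)` on nonnegative tensors (`+∞` otherwise),
the Fenchel conjugate is `h*(T) = ε ∑_x (exp((T(x)-C(x))/ε) - 1) = ε⟨K, exp(T/ε)⟩ - N^𝒯ε`;
in particular `h*` is finite everywhere, i.e. `h` is co-finite. -/
theorem conjugate_of_entropy_cost
    (T N : ℕ) (ε : ℝ) (hε : 0 < ε)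
    (C : (Fin T → Fin N) → EReal) (hC : ∀ x, C x ≠ ⊥)
    (K : Tens T N) (hK : ∀ x, K x = expNegE ε (C x))
    (h : Tens T N → EReal)
    (hh : ∀ M : Tens T N, h M =
      if ∀ x, 0 ≤ M x then einner C M + ((ε * entropy M : ℝ) : EReal) else ⊤) :
    ∀ Tt : Tens T N,
      fconj h Tt = (((ε * ∑ x : Fin T → Fin N, (K x * Real.exp (Tt x / ε) - 1) : ℝ)) : EReal) ∧
      ε * (∑ x : Fin T → Fin N, (K x * Real.exp (Tt x / ε) - 1))
        = ε * (∑ x : Fin T → Fin N, K x * Real.exp (Tt x / ε)) - (N : ℝ) ^ T * ε ∧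
      fconj h Tt ≠ ⊤ := by
  intro Tt
  have hcost : h = entropicCost ε C := funext fun M => by rw [hh]; rfl
  have hconj : fconj h Tt = ((ε * ∑ x, (K x * exp (Tt x / ε) - 1) : ℝ) : EReal) := by
    simp only [hcost, fconj_entropicCost hε hC, hK]
  refine ⟨hconj, ?_, hconj ▸ EReal.coe_ne_top _⟩
  rw [sum_sub_distrib, sum_const, card_univ, Fintype.card_fun, Fintype.card_fin, Fintype.card_fin]
  simp only [nsmul_eq_mul, mul_one, Nat.cast_pow]
  ring
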